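/- In a real inner product space, for any vectors a, b, c, ⟪3a − 4b + c, a⟫ = (‖a‖² + ‖2a − b‖²)/2 − (‖b‖² + ‖2b − c‖²)/2 + ‖a − 2b + c‖²/2. -/

import Mathlib

theorem bdf2_identity_inner {X : Type*} [NormedAddCommGroup X]
    [InnerProductSpace ℝ X] (a b c : X) :
    (inner ℝ (3 • a - 4 • b + c) a : ℝ) =
      (‖a‖ ^ 2 + ‖2 • a - b‖ ^ 2) / 2 - (‖b‖ ^ 2 + ‖2 • b - c‖ ^ 2) / 2
        + ‖a - 2 • b + c‖ ^ 2 / 2 := by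
  simp only [← Nat.cast_smul_eq_nsmul ℝ, ← real_inner_self_eq_norm_sq]
  simp only [inner_sub_sub_self, inner_sub_left, inner_sub_right, inner_add_left,
    inner_add_right, inner_smul_left, inner_smul_right, real_inner_comm a b,
    real_inner_comm a c, real_inner_comm b c]
  simp only [starRingEnd_apply, star_trivial]
  ring
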